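/- arXiv:2509.08195 — 4 statements merged into one kernel-verified Lean document; each statement's English description precedes it below -/
import Mathlib

section
/- Let α > 1, b > 0, σ > 0, τ ≥ 0 with 2ατ² < bσ². Then f_α(sqrt(1 + 2τ²/(bσ²))) ≤ α²τ⁴/((α-1)b²σ⁴), where f_α(x) = log x + (1/(2(α-1)))·log(x²/(αx² + 1 - α)). -/
/-!
At `x = √(1 + u)` the function is `f_α(x) = (α log(1 + u) - log(1 + αu)) / (2(α - 1))`.
Bounding `log(1 + u) ≤ u` and `log(1 + αu) ≥ αu - (αu)²/2` makes the linear terms cancel,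
leaving `f_α(x) ≤ (αu)² / (4(α - 1))`, which is the claimed bound at `u = 2τ²/(bσ²)`.
-/

open Real

noncomputable def falpha (α x : ℝ) : ℝ :=
  Real.log x + (1 / (2 * (α - 1))) * Real.log (x ^ 2 / (α * x ^ 2 + 1 - α))

lemma sub_sq_div_two_le_log_one_add {x : ℝ} (hx : 0 ≤ x) : x - x ^ 2 / 2 ≤ log (1 + x) := by
  refine le_trans ?_ (le_log_one_add_of_nonneg hx)
  rw [le_div_iff₀ (by linarith)]
  nlinarith [sq_nonneg x, mul_nonneg hx (sq_nonneg x)]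

lemma falpha_sqrt_one_add {α u : ℝ} (hα : α ≠ 1) (hu : 0 < 1 + u) (hαu : 0 < 1 + α * u) :
    falpha α (√(1 + u)) = (α * log (1 + u) - log (1 + α * u)) / (2 * (α - 1)) := by
  have hden : α * √(1 + u) ^ 2 + 1 - α = 1 + α * u := by rw [sq_sqrt hu.le]; ring
  rw [falpha, hden, sq_sqrt hu.le, log_sqrt hu.le, log_div hu.ne' hαu.ne']
  have : α - 1 ≠ 0 := sub_ne_zero.mpr hα
  field_simp
  ring

lemma falpha_sqrt_one_add_le {α u : ℝ} (hα : 1 < α) (hu : 0 ≤ u) :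
    falpha α (√(1 + u)) ≤ (α * u) ^ 2 / (4 * (α - 1)) := by
  have hαu : 0 ≤ α * u := mul_nonneg (by linarith) hu
  rw [falpha_sqrt_one_add hα.ne' (by linarith) (by linarith),
    div_le_div_iff₀ (by linarith) (by linarith)]
  have hlog : log (1 + u) ≤ u := by linarith [log_le_sub_one_of_pos (by linarith : 0 < 1 + u)]
  have hlog_α := sub_sq_div_two_le_log_one_add hαu
  nlinarith [mul_le_mul_of_nonneg_left hlog (by linarith : 0 ≤ α)]

theorem falpha_plus_bound_general (α b σ τ : ℝ) (hα : 1 < α) (hb : 0 < b) :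
    falpha α (Real.sqrt (1 + 2 * τ ^ 2 / (b * σ ^ 2)))
      ≤ α ^ 2 * τ ^ 4 / ((α - 1) * b ^ 2 * σ ^ 4) := by
  have hu : 0 ≤ 2 * τ ^ 2 / (b * σ ^ 2) := by positivity
  calc falpha α (√(1 + 2 * τ ^ 2 / (b * σ ^ 2)))
      ≤ (α * (2 * τ ^ 2 / (b * σ ^ 2))) ^ 2 / (4 * (α - 1)) := falpha_sqrt_one_add_le hα hu
    _ = α ^ 2 * τ ^ 4 / ((α - 1) * b ^ 2 * σ ^ 4) := by
      simp only [div_eq_mul_inv, mul_inv]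
      ring

theorem falpha_plus_bound (α b σ τ : ℝ) (hα : 1 < α) (hb : 0 < b) (hσ : 0 < σ)
    (hτ : 0 ≤ τ) (hdom : 2 * α * τ ^ 2 < b * σ ^ 2) :
    falpha α (Real.sqrt (1 + 2 * τ ^ 2 / (b * σ ^ 2)))
      ≤ α ^ 2 * τ ^ 4 / ((α - 1) * b ^ 2 * σ ^ 4) :=
  falpha_plus_bound_general α b σ τ hα hb
end

section
/- Let θ, θ' ∈ ℝ^d with ‖θ‖ ≤ mτ, ‖θ'‖ ≤ mτ, ‖θ − θ'‖ ≤ τ, and c = √(mb)·σ with m ≥ 1, b > 0, σ > 0 and 2τ² < bσ². Then sqrt((‖θ'‖² + c²)/(‖θ‖² + c²)) ≥ sqrt(1 − 2τ²/(bσ²)). -/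
open Real

/-- Lower bound on the ratio of aggregated clipped gradients from neighboring datasets. -/
theorem ratio_sensitivity_lower (d : ℕ) (θ θ' : EuclideanSpace ℝ (Fin d))
    (m τ b σ : ℝ) (hm : 1 ≤ m) (hb : 0 < b) (hσ : 0 < σ)
    (hθ : ‖θ‖ ≤ m * τ) (hθ' : ‖θ'‖ ≤ m * τ) (hdiff : ‖θ - θ'‖ ≤ τ)
    (hlt : 2 * τ ^ 2 < b * σ ^ 2) :
    Real.sqrt (1 - 2 * τ ^ 2 / (b * σ ^ 2))
      ≤ Real.sqrt ((‖θ'‖ ^ 2 + (Real.sqrt (m * b) * σ) ^ 2) /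
          (‖θ‖ ^ 2 + (Real.sqrt (m * b) * σ) ^ 2)) := by
  have hτ : 0 ≤ τ := le_trans (norm_nonneg _) hdiff
  have hmb : (0:ℝ) ≤ m * b := by positivity
  have hc : (Real.sqrt (m * b) * σ) ^ 2 = m * b * σ ^ 2 := by
    rw [mul_pow, Real.sq_sqrt hmb]
  rw [hc]
  apply Real.sqrt_le_sqrt
  have hbσ : 0 < b * σ ^ 2 := by positivity
  have hden : 0 < ‖θ‖ ^ 2 + m * b * σ ^ 2 := by nlinarith [sq_nonneg ‖θ‖]
  rw [le_div_iff₀ hden]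
  have h1 : ‖θ‖ - ‖θ'‖ ≤ τ := le_trans (norm_sub_norm_le θ θ') hdiff
  have h2 : ‖θ‖ ^ 2 - ‖θ'‖ ^ 2 ≤ 2 * m * τ ^ 2 := by
    nlinarith [norm_nonneg θ, norm_nonneg θ']
  have hdiv : 2 * τ ^ 2 / (b * σ ^ 2) * (b * σ ^ 2) = 2 * τ ^ 2 := by
    field_simp
  have hq : 0 ≤ 2 * τ ^ 2 / (b * σ ^ 2) := by positivity
  nlinarith [mul_nonneg hq (sq_nonneg ‖θ‖), sq_nonneg ‖θ‖, sq_nonneg ‖θ'‖]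
end

section
/- If a randomized mechanism f satisfies (α, ε)-Rényi differential privacy for some α > 1, then f satisfies (ε + log(1/δ)/(α-1), δ)-differential privacy for every δ ∈ (0,1). -/
open Real MeasureTheory

/-!
On the event `A = {p x > e^{ε'} p y}` the likelihood ratio exceeds `e^{ε'}`, so a Chernoff bound
with the `α`-th moment of the ratio (which the RDP hypothesis bounds by `e^{(α-1)ε}`) gives
`P_x(A) ≤ e^{(α-1)(ε - ε')} = δ`; off `A` the density `p x` is at most `e^{ε'} p y`.
-/

lemma rpow_sub_one_mul_le_div_rpow_mul {a b c α : ℝ} (hb : 0 < b) (hc : 0 < c)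
    (hcb : c * b ≤ a) (hα : 1 ≤ α) : c ^ (α - 1) * a ≤ (a / b) ^ α * b := by
  have hca : c ≤ a / b := (le_div_iff₀ hb).2 hcb
  have ha : 0 < a := (mul_pos hc hb).trans_le hcb
  have hab : 0 < a / b := div_pos ha hb
  calc c ^ (α - 1) * a ≤ (a / b) ^ (α - 1) * a :=
        mul_le_mul_of_nonneg_right (rpow_le_rpow hc.le hca (by linarith)) ha.le
    _ = (a / b) ^ α * b := by
        rw [rpow_sub_one hab.ne']
        field_simp [ha.ne']

lemma le_exp_mul_of_one_div_mul_log_le {I k ε : ℝ} (hk : 0 < k) (h : 1 / k * log I ≤ ε) :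
    I ≤ exp (k * ε) := by
  rcases le_or_gt I 0 with hI | hI
  · exact hI.trans (exp_pos _).le
  · rw [one_div, inv_mul_le_iff₀ hk] at h
    exact (exp_log hI).symm.le.trans (exp_le_exp.2 h)

section

variable {Ω : Type*} [MeasurableSpace Ω] {μ : Measure Ω} {f g : Ω → ℝ} {c : ℝ}

lemma setIntegral_le_const_mul_add_setIntegral_lt (hc : 0 ≤ c) (hf₀ : ∀ ω, 0 ≤ f ω)
    (hg₀ : ∀ ω, 0 ≤ g ω) (hf : Integrable f μ) (hg : Integrable g μ) {Y : Set Ω}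
    (hY : MeasurableSet Y) (hA : MeasurableSet {ω | c * g ω < f ω}) :
    ∫ ω in Y, f ω ∂μ ≤ c * ∫ ω in Y, g ω ∂μ + ∫ ω in {ω | c * g ω < f ω}, f ω ∂μ := by
  set A := {ω | c * g ω < f ω}
  have hYA : ∫ ω in Y ∩ A, f ω ∂μ ≤ ∫ ω in A, f ω ∂μ :=
    setIntegral_mono_set hf.integrableOn (ae_of_all _ hf₀) Set.inter_subset_right.eventuallyLE
  have hYdiffA : ∫ ω in Y \ A, f ω ∂μ ≤ c * ∫ ω in Y, g ω ∂μ :=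
    calc ∫ ω in Y \ A, f ω ∂μ ≤ ∫ ω in Y \ A, c * g ω ∂μ :=
          setIntegral_mono_on hf.integrableOn (hg.const_mul c).integrableOn (hY.diff hA)
            fun ω hω => not_lt.1 hω.2
      _ = c * ∫ ω in Y \ A, g ω ∂μ := integral_const_mul c _
      _ ≤ c * ∫ ω in Y, g ω ∂μ := mul_le_mul_of_nonneg_left
          (setIntegral_mono_set hg.integrableOn (ae_of_all _ hg₀) Set.sdiff_subset.eventuallyLE) hc
  rw [← integral_inter_add_sdiff hA hf.integrableOn]
  linarith

lemma setIntegral_lt_le_div_rpow {α : ℝ} (hc : 0 < c) (hα : 1 ≤ α) (hf₀ : ∀ ω, 0 ≤ f ω)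
    (hg₀ : ∀ ω, 0 < g ω) (hf : Integrable f μ)
    (hfg : Integrable (fun ω => (f ω / g ω) ^ α * g ω) μ)
    (hA : MeasurableSet {ω | c * g ω < f ω}) :
    ∫ ω in {ω | c * g ω < f ω}, f ω ∂μ ≤ (∫ ω, (f ω / g ω) ^ α * g ω ∂μ) / c ^ (α - 1) := by
  rw [le_div_iff₀' (rpow_pos_of_pos hc _), ← integral_const_mul]
  calc ∫ ω in {ω | c * g ω < f ω}, c ^ (α - 1) * f ω ∂μ
      ≤ ∫ ω in {ω | c * g ω < f ω}, (f ω / g ω) ^ α * g ω ∂μ :=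
        setIntegral_mono_on (hf.const_mul _).integrableOn hfg.integrableOn hA
          fun ω hω => rpow_sub_one_mul_le_div_rpow_mul (hg₀ ω) hc (le_of_lt hω) hα
    _ ≤ ∫ ω, (f ω / g ω) ^ α * g ω ∂μ := setIntegral_le_integral hfg <| ae_of_all _ fun ω =>
        mul_nonneg (rpow_nonneg (div_nonneg (hf₀ ω) (hg₀ ω).le) _) (hg₀ ω).le

end

theorem rdp_to_dp_general {D Ω : Type*} [MeasurableSpace Ω] (μ : Measure Ω)
    (adj : D → D → Prop) (p : D → Ω → ℝ) (α ε δ : ℝ) (hα : 1 < α)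
    (hδ₀ : 0 < δ)
    (hmeas : ∀ x, Measurable (p x))
    (hpos : ∀ x ω, 0 < p x ω)
    (hprob : ∀ x, ∫ ω, p x ω ∂μ = 1)
    (hint : ∀ x y, adj x y → Integrable (fun ω => (p x ω / p y ω) ^ α * p y ω) μ)
    (hRDP : ∀ x y, adj x y →
      (1 / (α - 1)) * Real.log (∫ ω, (p x ω / p y ω) ^ α * p y ω ∂μ) ≤ ε) :
    ∀ x y, adj x y → ∀ Y : Set Ω, MeasurableSet Y →
      ∫ ω in Y, p x ω ∂μ
        ≤ Real.exp (ε + Real.log (1 / δ) / (α - 1)) * ∫ ω in Y, p y ω ∂μ + δ := by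
  intro x y hxy Y hY
  have hα₁ : 0 < α - 1 := sub_pos.2 hα
  set ε' := ε + log (1 / δ) / (α - 1)
  have hintegrable (z : D) : Integrable (p z) μ :=
    Integrable.of_integral_ne_zero (by rw [hprob z]; exact one_ne_zero)
  have hA : MeasurableSet {ω | exp ε' * p y ω < p x ω} :=
    measurableSet_lt (measurable_const.mul (hmeas y)) (hmeas x)
  have hmoment := le_exp_mul_of_one_div_mul_log_le hα₁ (hRDP x y hxy)
  have hδ : exp ((α - 1) * ε) / exp ε' ^ (α - 1) = δ := by
    have hexponent : (α - 1) * ε - ε' * (α - 1) = log δ := by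
      simp only [ε', one_div, log_inv]
      field_simp [hα₁.ne']
      ring
    rw [← exp_mul, ← exp_sub, hexponent, exp_log hδ₀]
  calc ∫ ω in Y, p x ω ∂μ
      ≤ exp ε' * ∫ ω in Y, p y ω ∂μ + ∫ ω in {ω | exp ε' * p y ω < p x ω}, p x ω ∂μ :=
        setIntegral_le_const_mul_add_setIntegral_lt (exp_pos _).le (fun ω => (hpos x ω).le)
          (fun ω => (hpos y ω).le) (hintegrable x) (hintegrable y) hY hA
    _ ≤ exp ε' * ∫ ω in Y, p y ω ∂μ + (∫ ω, (p x ω / p y ω) ^ α * p y ω ∂μ) / exp ε' ^ (α - 1) :=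
        add_le_add_right (setIntegral_lt_le_div_rpow (exp_pos _) hα.le (fun ω => (hpos x ω).le)
          (hpos y) (hintegrable x) (hint x y hxy) hA) _
    _ ≤ exp ε' * ∫ ω in Y, p y ω ∂μ + δ := by
        rw [← hδ]
        gcongr

/-- Mironov's RDP-to-DP conversion: if a mechanism (given by positive densities `p x` with
respect to a base measure `μ`) satisfies `(α, ε)`-Rényi differential privacy, then it satisfies
`(ε + log(1/δ)/(α-1), δ)`-differential privacy for every `δ ∈ (0,1)`. -/
theorem rdp_to_dp {D Ω : Type*} [MeasurableSpace Ω] (μ : Measure Ω) [SigmaFinite μ]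
    (adj : D → D → Prop) (p : D → Ω → ℝ) (α ε δ : ℝ) (hα : 1 < α)
    (hδ₀ : 0 < δ) (hδ₁ : δ < 1)
    (hmeas : ∀ x, Measurable (p x))
    (hpos : ∀ x ω, 0 < p x ω)
    (hprob : ∀ x, ∫ ω, p x ω ∂μ = 1)
    (hint : ∀ x y, adj x y → Integrable (fun ω => (p x ω / p y ω) ^ α * p y ω) μ)
    (hRDP : ∀ x y, adj x y →
      (1 / (α - 1)) * Real.log (∫ ω, (p x ω / p y ω) ^ α * p y ω ∂μ) ≤ ε) :
    ∀ x y, adj x y → ∀ Y : Set Ω, MeasurableSet Y →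
      ∫ ω in Y, p x ω ∂μ
        ≤ Real.exp (ε + Real.log (1 / δ) / (α - 1)) * ∫ ω in Y, p y ω ∂μ + δ :=
  rdp_to_dp_general μ adj p α ε δ hα hδ₀ hmeas hpos hprob hint hRDP
end

section
/- Let v_{t-1}, v_t ∈ ℝ (coordinates of second-moment estimates) with v_t = max(β₂ v_{t-1} + (1−β₂)g², v_{t-1}) for some g ∈ ℝ, β₂ ∈ [0,1), v_{t-1} ≥ 0, and let ε > 0. Then |1/(√v_t + ε) − 1/(√v_{t-1} + ε)| ≤ (√(1−β₂)/ε²)·|g|. -/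
open Real

/-- Per-coordinate change of the AMSGrad preconditioner between consecutive iterations. -/
theorem amsgrad_preconditioner_change (β₂ vprev g ε : ℝ) (hβ₂₀ : 0 ≤ β₂) (hβ₂₁ : β₂ < 1)
    (hv : 0 ≤ vprev) (hε : 0 < ε) :
    |1 / (Real.sqrt (max (β₂ * vprev + (1 - β₂) * g ^ 2) vprev) + ε)
        - 1 / (Real.sqrt vprev + ε)|
      ≤ (Real.sqrt (1 - β₂) / ε ^ 2) * |g| := by
  set v := max (β₂ * vprev + (1 - β₂) * g ^ 2) vprev with hvdef
  have hvge : vprev ≤ v := le_max_right _ _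
  have hv0 : 0 ≤ v := le_trans hv hvge
  have hsub : v - vprev ≤ (1 - β₂) * g ^ 2 := by
    rcases max_cases (β₂ * vprev + (1 - β₂) * g ^ 2) vprev with ⟨h1, h2⟩ | ⟨h1, h2⟩ <;>
      rw [hvdef, h1] <;> nlinarith [sq_nonneg g]
  have hst : Real.sqrt vprev ≤ Real.sqrt v := Real.sqrt_le_sqrt hvge
  have hsp : 0 ≤ Real.sqrt vprev := Real.sqrt_nonneg _
  have hd1 : 0 < Real.sqrt v + ε := by linarith [Real.sqrt_nonneg v]
  have hd2 : 0 < Real.sqrt vprev + ε := by linarith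
  have hnum : Real.sqrt v - Real.sqrt vprev ≤ Real.sqrt (1 - β₂) * |g| := by
    have h2 : Real.sqrt v - Real.sqrt vprev ≤ Real.sqrt (v - vprev) := by
      nlinarith [Real.sq_sqrt (sub_nonneg.mpr hvge), Real.sq_sqrt hv, Real.sq_sqrt hv0,
        Real.sqrt_nonneg (v - vprev), Real.sqrt_nonneg v]
    have h3 : Real.sqrt (v - vprev) ≤ Real.sqrt ((1 - β₂) * g ^ 2) :=
      Real.sqrt_le_sqrt hsub
    have h4 : Real.sqrt ((1 - β₂) * g ^ 2) = Real.sqrt (1 - β₂) * |g| := by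
      rw [Real.sqrt_mul (by linarith), Real.sqrt_sq_eq_abs]
    linarith [h4 ▸ h3]
  have heq : |1 / (Real.sqrt v + ε) - 1 / (Real.sqrt vprev + ε)|
      = (Real.sqrt v - Real.sqrt vprev) / ((Real.sqrt v + ε) * (Real.sqrt vprev + ε)) := by
    rw [div_sub_div _ _ (ne_of_gt hd1) (ne_of_gt hd2), abs_div]
    rw [abs_of_nonpos (by linarith : (1 * (Real.sqrt vprev + ε) - (Real.sqrt v + ε) * 1) ≤ 0),
      abs_of_pos (mul_pos hd1 hd2)]
    ring_nf
  rw [heq, div_mul_eq_mul_div]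
  exact div_le_div₀ (by positivity) hnum (by positivity)
    (by nlinarith [Real.sqrt_nonneg v])
end
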